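/- arXiv:2204.02726 — 3 statements merged into one kernel-verified Lean document; each statement's English description precedes it below -/
import Mathlib

section
/- Let β, L > 0 and let g : (0,1) → ℝ belong to the Hölder class H(β, L). Let K be a kernel supported in [−A, A] which is of order 𝓛 for some 𝓛 ≥ β, with C_{K,𝓛} := ∫_ℝ (1 + |y|)^𝓛 |K(y)| dy. Then for every u ∈ (0,1) and h > 0 such that u − A·h > 0 and u + A·h < 1, one has | ∫_0^1 g(w)·K_h(u − w) dw − g(u) | ≤ C_{K,𝓛} · L · h^β. -/
open Real Set MeasureTheory
open scoped Nat

/-- Rescaled kernel `K_h(y) = h⁻¹ K (y/h)`. -/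
noncomputable def Kh (K : ℝ → ℝ) (h y : ℝ) : ℝ := h⁻¹ * K (y / h)

private lemma iterOpen {f : ℝ → ℝ} {U : Set ℝ} (hU : IsOpen U) {x : ℝ} (hx : x ∈ U) (k : ℕ) :
    iteratedDerivWithin k f U x = iteratedDeriv k f x := by
  rw [iteratedDerivWithin_eq_iteratedFDerivWithin, iteratedDeriv_eq_iteratedFDeriv,
    iteratedFDerivWithin_of_isOpen k hU hx]

private lemma iterIcc {f : ℝ → ℝ} {U : Set ℝ} (hU : IsOpen U) {a b : ℝ} (hab : a < b)
    (hsub : Set.Icc a b ⊆ U) {n k : ℕ} (hk : k ≤ n) (hf : ContDiffOn ℝ n f U)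
    {x : ℝ} (hx : x ∈ Set.Icc a b) :
    iteratedDerivWithin k f (Set.Icc a b) x = iteratedDeriv k f x := by
  have H := hf.ftaylorSeriesWithin hU.uniqueDiffOn
  have H2 := (H.mono hsub).eq_iteratedFDerivWithin_of_uniqueDiffOn
    (by exact_mod_cast hk) (uniqueDiffOn_Icc hab) hx
  have h1 : iteratedFDerivWithin ℝ k f (Set.Icc a b) x = iteratedFDerivWithin ℝ k f U x := by
    rw [← H2]; rfl
  rw [iteratedDerivWithin_eq_iteratedFDerivWithin, h1, iteratedDeriv_eq_iteratedFDeriv,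
    iteratedFDerivWithin_of_isOpen k hU (hsub hx)]

private lemma iterRefl (f : ℝ → ℝ) (c : ℝ) (k : ℕ) (t : ℝ) :
    iteratedDeriv k (fun z => f (c - z)) t = (-1 : ℝ) ^ k * iteratedDeriv k f (c - t) := by
  calc iteratedDeriv k (fun z => f (c - z)) t
      = iteratedDeriv k (fun z : ℝ => (fun w => f (c + w)) (-z)) t := by
        rw [show (fun z : ℝ => f (c - z)) = (fun z : ℝ => (fun w => f (c + w)) (-z)) from
          funext fun z => by simp [sub_eq_add_neg]]
    _ = (-1 : ℝ) ^ k • iteratedDeriv k (fun w => f (c + w)) (-t) :=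
        iteratedDeriv_comp_neg k (fun w => f (c + w)) t
    _ = (-1 : ℝ) ^ k • iteratedDeriv k f (c + -t) := by rw [iteratedDeriv_comp_const_add]
    _ = (-1 : ℝ) ^ k * iteratedDeriv k f (c - t) := by rw [smul_eq_mul, sub_eq_add_neg]

/-- Taylor's theorem with Lagrange remainder expressed via global iterated derivatives,
on an open set. -/
private lemma taylor_core {U : Set ℝ} (hU : IsOpen U) (m : ℕ) {f : ℝ → ℝ}
    (hf : ContDiffOn ℝ (m + 1) f U) {u x : ℝ} (hux : u < x) (hsub : Set.Icc u x ⊆ U) :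
    ∃ ξ ∈ Set.Ioo u x,
      f x - ∑ k ∈ Finset.range (m + 1 + 1), ((k ! : ℝ)⁻¹ * (x - u) ^ k * iteratedDeriv k f u)
        = (iteratedDeriv (m + 1) f ξ - iteratedDeriv (m + 1) f u) * (x - u) ^ (m + 1)
            / (m + 1)! := by
  have hEq : ∀ k : ℕ, k ≤ m + 1 → ∀ y ∈ Set.Icc u x,
      iteratedDerivWithin k f (Set.Icc u x) y = iteratedDeriv k f y :=
    fun k hk y hy => iterIcc hU hux hsub hk hf hy
  have hcd : ContDiffOn ℝ m f (Set.Icc u x) :=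
    (hf.of_le (by exact_mod_cast Nat.le_succ m)).mono hsub
  have hdOn : DifferentiableOn ℝ (iteratedDerivWithin m f U) U :=
    hf.differentiableOn_iteratedDerivWithin (by exact_mod_cast Nat.lt_succ_self m)
      hU.uniqueDiffOn
  have hdiffAt : ∀ t ∈ U, DifferentiableAt ℝ (iteratedDeriv m f) t := by
    intro t ht
    have h2 : DifferentiableAt ℝ (iteratedDerivWithin m f U) t :=
      (hdOn t ht).differentiableAt (hU.mem_nhds ht)
    exact h2.congr_of_eventuallyEq <| Filter.eventuallyEq_of_mem (hU.mem_nhds ht)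
      fun y hy => (iterOpen hU hy m).symm
  have hdiff : DifferentiableOn ℝ (iteratedDerivWithin m f (Set.Icc u x)) (Set.Ioo u x) := by
    intro t ht
    have htIcc : t ∈ Set.Icc u x := Set.Ioo_subset_Icc_self ht
    exact ((hdiffAt t (hsub htIcc)).differentiableWithinAt).congr
      (fun y hy => hEq m (Nat.le_succ m) y (Set.Ioo_subset_Icc_self hy))
      (hEq m (Nat.le_succ m) t htIcc)
  obtain ⟨ξ, hξ, hT⟩ := taylor_mean_remainder_lagrange hux.ne
    (by rw [Set.uIcc_of_le hux.le]; exact hcd)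
    (by rw [Set.uIcc_of_le hux.le, Set.uIoo_of_le hux.le]; exact hdiff)
  rw [Set.uIoo_of_le hux.le] at hξ
  rw [Set.uIcc_of_le hux.le] at hT
  refine ⟨ξ, hξ, ?_⟩
  have hTE : taylorWithinEval f m (Set.Icc u x) u x
      = ∑ k ∈ Finset.range (m + 1), ((k ! : ℝ)⁻¹ * (x - u) ^ k * iteratedDeriv k f u) := by
    rw [taylor_within_apply]
    refine Finset.sum_congr rfl fun k hk => ?_
    have hk' : k ≤ m + 1 := by
      have := Finset.mem_range.mp hk; omega
    rw [hEq k hk' u (Set.left_mem_Icc.mpr hux.le)]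
    simp only [smul_eq_mul]
  have hξIcc : ξ ∈ Set.Icc u x := Set.Ioo_subset_Icc_self hξ
  have hRem : iteratedDerivWithin (m + 1) f (Set.Icc u x) ξ = iteratedDeriv (m + 1) f ξ :=
    hEq (m + 1) le_rfl ξ hξIcc
  have hfac : ((m + 1)! : ℝ) ≠ 0 := Nat.cast_ne_zero.mpr (Nat.factorial_ne_zero _)
  have hgoal : f x - ∑ k ∈ Finset.range (m + 1 + 1),
        ((k ! : ℝ)⁻¹ * (x - u) ^ k * iteratedDeriv k f u)
      = (f x - taylorWithinEval f m (Set.Icc u x) u x)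
        - (((m + 1)! : ℝ)⁻¹ * (x - u) ^ (m + 1) * iteratedDeriv (m + 1) f u) := by
    rw [Finset.sum_range_succ, hTE]; ring
  rw [hgoal, hT, hRem]
  field_simp

private lemma taylor_est {L βl : ℝ} (hL : 0 ≤ L) (hβl : 0 ≤ βl) {Dξ Du δ t : ℝ} (m : ℕ)
    (hhold : |Dξ - Du| ≤ L * δ ^ βl) (hδ : 0 ≤ δ) (hδt : δ ≤ |t|) :
    |(Dξ - Du) * t ^ (m + 1) / (m + 1)!| ≤ L * |t| ^ βl * |t| ^ (m + 1) := by
  have h2 : |Dξ - Du| ≤ L * |t| ^ βl :=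
    hhold.trans (mul_le_mul_of_nonneg_left (Real.rpow_le_rpow hδ hδt hβl) hL)
  have hone : (1 : ℝ) ≤ ((m + 1)! : ℝ) := by exact_mod_cast (Nat.factorial_pos (m + 1))
  calc |(Dξ - Du) * t ^ (m + 1) / (m + 1)!|
      = |Dξ - Du| * |t| ^ (m + 1) / ((m + 1)! : ℝ) := by
        rw [abs_div, abs_mul, abs_pow, Nat.abs_cast]
    _ ≤ |Dξ - Du| * |t| ^ (m + 1) := div_le_self (by positivity) hone
    _ ≤ (L * |t| ^ βl) * |t| ^ (m + 1) := mul_le_mul_of_nonneg_right h2 (by positivity)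
    _ = L * |t| ^ βl * |t| ^ (m + 1) := by ring

private lemma taylor_bound {β L : ℝ} (hβ : 0 < β) (hL : 0 ≤ L) {l : ℕ} (hl : (l : ℝ) < β)
    {g : ℝ → ℝ} (hg : ContDiffOn ℝ l g (Set.Ioo 0 1))
    (hhold : ∀ y ∈ Set.Ioo (0:ℝ) 1, ∀ y' ∈ Set.Ioo (0:ℝ) 1,
      |iteratedDeriv l g y' - iteratedDeriv l g y| ≤ L * |y' - y| ^ (β - l))
    {u x : ℝ} (hu : u ∈ Set.Ioo (0:ℝ) 1) (hx : x ∈ Set.Ioo (0:ℝ) 1) :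
    |g x - ∑ k ∈ Finset.range (l + 1), ((k ! : ℝ)⁻¹ * (x - u) ^ k * iteratedDeriv k g u)|
      ≤ L * |x - u| ^ (β - (l : ℝ)) * |x - u| ^ l := by
  have hβl : 0 ≤ β - (l : ℝ) := by linarith
  have hsubIoo : ∀ {a b : ℝ}, a ∈ Set.Ioo (0:ℝ) 1 → b ∈ Set.Ioo (0:ℝ) 1 →
      Set.Icc a b ⊆ Set.Ioo (0:ℝ) 1 := fun ha hb => Set.Icc_subset_Ioo ha.1 hb.2
  by_cases hxu : x = u
  · subst hxu
    have hsum : ∑ k ∈ Finset.range (l + 1),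
        ((k ! : ℝ)⁻¹ * (x - x) ^ k * iteratedDeriv k g x) = g x := by
      rw [Finset.sum_eq_single_of_mem 0 (Finset.mem_range.mpr (Nat.succ_pos l))]
      · simp [iteratedDeriv_zero]
      · intro k _ hk
        simp [sub_self, zero_pow hk]
    rw [hsum, sub_self, abs_zero, sub_self, abs_zero,
      Real.zero_rpow (by intro hc; rw [sub_eq_zero] at hc; exact absurd hc.symm (ne_of_lt hl))]
    simp
  rcases Nat.eq_zero_or_pos l with hlz | hpos
  · subst hlz
    simpa [iteratedDeriv_zero] using hhold u hu x hx
  obtain ⟨m, rfl⟩ : ∃ m, l = m + 1 := ⟨l - 1, (Nat.succ_pred_eq_of_pos hpos).symm⟩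
  rcases lt_trichotomy u x with hux | heqq | hxu'
  · -- u < x
    obtain ⟨ξ, hξ, heq⟩ := taylor_core isOpen_Ioo m hg hux (hsubIoo hu hx)
    have hξ01 : ξ ∈ Set.Ioo (0:ℝ) 1 := hsubIoo hu hx (Set.Ioo_subset_Icc_self hξ)
    rw [heq]
    refine taylor_est hL hβl m (hhold u hu ξ hξ01) (abs_nonneg _) ?_
    rw [abs_of_pos (by linarith [hξ.1] : (0:ℝ) < ξ - u),
      abs_of_pos (by linarith : (0:ℝ) < x - u)]
    linarith [hξ.2]
  · exact absurd heqq.symm hxu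
  · -- x < u : reflect
    set c := u + x with hc
    set G : ℝ → ℝ := fun t => g (c - t) with hG
    set UG : Set ℝ := (fun t : ℝ => c - t) ⁻¹' (Set.Ioo 0 1) with hUG
    have hUGopen : IsOpen UG := (isOpen_Ioo).preimage (continuous_const.sub continuous_id)
    have hGsm : ContDiffOn ℝ (m + 1) G UG := by
      refine ContDiffOn.comp hg ((contDiff_const.sub contDiff_id).contDiffOn) fun t ht => ht
    have hsubG : Set.Icc x u ⊆ UG := by
      intro t ht
      have h1 := ht.1; have h2 := ht.2
      have : c - t ∈ Set.Ioo (0:ℝ) 1 :=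
        ⟨by simp only [hc]; linarith [hx.1], by simp only [hc]; linarith [hu.2]⟩
      exact this
    obtain ⟨ξ, hξ, heq⟩ := taylor_core hUGopen m hGsm hxu' hsubG
    set ξ' := c - ξ with hξ'
    have hξ'mem : ξ' ∈ Set.Ioo x u := by
      constructor
      · simp only [hξ', hc]; linarith [hξ.2]
      · simp only [hξ', hc]; linarith [hξ.1]
    have hξ'01 : ξ' ∈ Set.Ioo (0:ℝ) 1 := hsubIoo hx hu (Set.Ioo_subset_Icc_self hξ'mem)
    have hGval : G u = g x := by
      simp only [hG]
      rw [show c - u = x by rw [hc]; ring]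
    have e2 : iteratedDeriv (m + 1) G ξ = (-1:ℝ)^(m+1) * iteratedDeriv (m+1) g ξ' := by
      rw [hG, iterRefl, ← hξ']
    have e3 : iteratedDeriv (m + 1) G x = (-1:ℝ)^(m+1) * iteratedDeriv (m+1) g u := by
      rw [hG, iterRefl, show c - x = u by rw [hc]; ring]
    have hsumeq : ∑ k ∈ Finset.range (m + 1 + 1),
          ((k ! : ℝ)⁻¹ * (u - x) ^ k * iteratedDeriv k G x)
        = ∑ k ∈ Finset.range (m + 1 + 1),
          ((k ! : ℝ)⁻¹ * (x - u) ^ k * iteratedDeriv k g u) := by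
      refine Finset.sum_congr rfl fun k _ => ?_
      rw [hG, iterRefl, show c - x = u by rw [hc]; ring,
        show (x - u : ℝ) = (-1) * (u - x) by ring, mul_pow]
      ring
    rw [hGval, hsumeq, e2, e3] at heq
    have heq2 : g x - ∑ k ∈ Finset.range (m + 1 + 1),
          ((k ! : ℝ)⁻¹ * (x - u) ^ k * iteratedDeriv k g u)
        = (iteratedDeriv (m+1) g ξ' - iteratedDeriv (m+1) g u) * (x - u) ^ (m + 1)
            / (m + 1)! := by
      rw [heq, show (u - x : ℝ) = (-1) * (x - u) by ring, mul_pow]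
      have hneg : ((-1:ℝ))^(m+1) * ((-1:ℝ))^(m+1) = 1 := by
        rw [← mul_pow]; norm_num
      congr 1
      linear_combination (iteratedDeriv (m+1) g ξ' - iteratedDeriv (m+1) g u)
        * (x - u)^(m+1) * hneg
    rw [heq2]
    refine taylor_est hL hβl m (hhold u hu ξ' hξ'01) (abs_nonneg _) ?_
    rw [abs_of_neg (by linarith [hξ'mem.2] : ξ' - u < 0),
      abs_of_neg (by linarith : x - u < 0)]
    linarith [hξ'mem.1]

/-- Bias bound: if `g` belongs to the Hölder class `H(β, L)` on `(0,1)` and the kernel `K`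
(supported in `[-A, A]`) is of order `𝓛 ≥ β`, then for `u ∈ (0,1)` and `h > 0` with
`u - A h > 0` and `u + A h < 1`,
`|∫_0^1 g(w) K_h(u - w) dw - g(u)| ≤ C_{K,𝓛} · L · h^β`. -/
theorem stmt2 (β L : ℝ) (hβ : 0 < β) (hL : 0 < L) (l : ℕ)
    (hl : (l : ℝ) < β) (hl' : β ≤ l + 1)
    (g : ℝ → ℝ)
    (hgsmooth : ContDiffOn ℝ l g (Set.Ioo 0 1))
    (hghold : ∀ y ∈ Set.Ioo (0:ℝ) 1, ∀ y' ∈ Set.Ioo (0:ℝ) 1,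
      |iteratedDerivWithin l g (Set.Ioo 0 1) y' - iteratedDerivWithin l g (Set.Ioo 0 1) y|
        ≤ L * |y' - y| ^ (β - l))
    (K : ℝ → ℝ) (A : ℝ) (hA : 0 < A)
    (hKmeas : Measurable K) (hKint : Integrable K)
    (hKbdd : ∃ C, ∀ y, |K y| ≤ C) (hKL2 : Integrable (fun y => (K y) ^ 2))
    (hKsupp : ∀ y : ℝ, y ∉ Set.Icc (-A) A → K y = 0) (hKone : (∫ y, K y) = 1)
    (𝓛 : ℝ) (h𝓛β : β ≤ 𝓛) (l𝓛 : ℕ) (hl𝓛 : (l𝓛 : ℝ) < 𝓛) (hl𝓛' : 𝓛 ≤ l𝓛 + 1)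
    (hCfin : Integrable (fun y => (1 + |y|) ^ 𝓛 * |K y|))
    (hmom : ∀ k : ℕ, 1 ≤ k → k ≤ l𝓛 → (∫ y, (y : ℝ) ^ k * K y) = 0)
    (u h : ℝ) (hu : u ∈ Set.Ioo (0:ℝ) 1) (hh : 0 < h)
    (hs1 : 0 < u - A * h) (hs2 : u + A * h < 1) :
    |(∫ w in Set.Ioo (0:ℝ) 1, g w * Kh K h (u - w)) - g u|
      ≤ (∫ y, (1 + |y|) ^ 𝓛 * |K y|) * L * h ^ β := by
  obtain ⟨hu0, hu1⟩ := hu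
  have hh0 : (h:ℝ) ≠ 0 := ne_of_gt hh
  -- Step A: the integrand vanishes outside (0,1)
  have hA1 : ∀ w ∉ Set.Ioo (0:ℝ) 1, g w * Kh K h (u - w) = 0 := by
    intro w hw
    have hK0 : K ((u - w) / h) = 0 := by
      apply hKsupp
      rw [Set.mem_Icc]
      push_neg
      simp only [Set.mem_Ioo, not_and_or, not_lt] at hw
      rcases hw with hw | hw
      · intro _
        rw [lt_div_iff₀ hh]
        linarith
      · intro hcon
        exfalso
        rw [le_div_iff₀ hh] at hcon
        linarith
    simp [Kh, hK0]
  rw [setIntegral_eq_integral_of_forall_compl_eq_zero hA1]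
  -- Step B: change of variables
  set F : ℝ → ℝ := fun t => g (u - h * (t / h)) * K (t / h) with hF
  have hFK : ∀ w : ℝ, g w * Kh K h (u - w) = h⁻¹ * F (u - w) := by
    intro w
    simp only [hF, Kh]
    rw [show u - h * ((u - w) / h) = w by field_simp; ring]
    ring
  have hstep : (∫ w : ℝ, g w * Kh K h (u - w)) = ∫ y : ℝ, g (u - h * y) * K y := by
    calc (∫ w : ℝ, g w * Kh K h (u - w)) = ∫ w : ℝ, h⁻¹ * F (u - w) := by simp_rw [hFK]
      _ = h⁻¹ * ∫ w : ℝ, F (u - w) := integral_const_mul _ _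
      _ = h⁻¹ * ∫ t : ℝ, F t := by rw [integral_sub_left_eq_self F volume u]
      _ = h⁻¹ * (|h| • ∫ y : ℝ, g (u - h * y) * K y) := by
          have e : (∫ t : ℝ, F t) = |h| • ∫ y : ℝ, g (u - h * y) * K y := by
            rw [hF]
            exact MeasureTheory.Measure.integral_comp_div
              (fun y => g (u - h * y) * K y) h
          rw [e]
      _ = ∫ y : ℝ, g (u - h * y) * K y := by
          rw [abs_of_pos hh, smul_eq_mul, ← mul_assoc, inv_mul_cancel₀ hh0, one_mul]
  rw [hstep]
  -- basic index bound
  have hl_le : l ≤ l𝓛 := by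
    have h1 : (l : ℝ) < (l𝓛 : ℝ) + 1 := lt_of_lt_of_le hl (h𝓛β.trans hl𝓛')
    exact Nat.lt_succ_iff.mp (by exact_mod_cast h1)
  -- the Taylor polynomial
  set P : ℝ → ℝ := fun y => ∑ k ∈ Finset.range (l + 1),
      ((k ! : ℝ)⁻¹ * (-(h * y)) ^ k * iteratedDeriv k g u) with hP
  obtain ⟨C, hC⟩ := hKbdd
  -- integrability of continuous-times-kernel functions
  have keyInt : ∀ p : ℝ → ℝ, ContinuousOn p (Set.Icc (-A) A) →
      Integrable (fun y => p y * K y) := by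
    intro p hp
    obtain ⟨M, hM⟩ := IsCompact.exists_bound_of_continuousOn isCompact_Icc hp
    have hind : (fun y => p y * K y)
        = Set.indicator (Set.Icc (-A) A) (fun y => p y * K y) := by
      funext y
      by_cases hy : y ∈ Set.Icc (-A) A
      · rw [Set.indicator_of_mem hy]
      · rw [Set.indicator_of_notMem hy, hKsupp y hy, mul_zero]
    rw [hind, integrable_indicator_iff measurableSet_Icc]
    refine Integrable.mono' (g := fun _ => M * C)
      (integrableOn_const measure_Icc_lt_top.ne)
      ((hp.aestronglyMeasurable measurableSet_Icc).mul
        hKmeas.aestronglyMeasurable.restrict) ?_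
    filter_upwards [ae_restrict_mem measurableSet_Icc] with y hy
    have h1 : ‖p y‖ ≤ M := hM y hy
    calc ‖p y * K y‖ = ‖p y‖ * |K y| := by rw [norm_mul]; rfl
      _ ≤ M * C := mul_le_mul h1 (hC y) (abs_nonneg _) ((norm_nonneg _).trans h1)
  have hmapIcc : ∀ y ∈ Set.Icc (-A) A, u - h * y ∈ Set.Ioo (0:ℝ) 1 := by
    intro y hy
    constructor
    · nlinarith [mul_le_mul_of_nonneg_left hy.2 hh.le]
    · nlinarith [mul_le_mul_of_nonneg_left hy.1 hh.le]
  have hgc : ContinuousOn (fun y => g (u - h * y)) (Set.Icc (-A) A) :=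
    hgsmooth.continuousOn.comp
      ((continuous_const.sub (continuous_const.mul continuous_id)).continuousOn) hmapIcc
  have hPc : ContinuousOn P (Set.Icc (-A) A) := by
    rw [hP]
    apply Continuous.continuousOn
    apply continuous_finset_sum
    intro k _
    exact (continuous_const.mul
      (((continuous_const.mul continuous_id).neg).pow k)).mul continuous_const
  have hIntP : Integrable (fun y => P y * K y) := keyInt _ hPc
  have hIntR : Integrable (fun y => (g (u - h * y) - P y) * K y) := keyInt _ (hgc.sub hPc)
  have hsplit : (∫ y : ℝ, g (u - h * y) * K y)
      = (∫ y : ℝ, P y * K y) + ∫ y : ℝ, (g (u - h * y) - P y) * K y := by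
    rw [← integral_add hIntP hIntR]
    refine integral_congr_ae (Filter.Eventually.of_forall fun y => ?_)
    ring
  have hIntMom : ∀ k : ℕ, Integrable (fun y : ℝ => y ^ k * K y) := fun k =>
    keyInt _ (continuous_pow k).continuousOn
  have hPint : (∫ y : ℝ, P y * K y) = g u := by
    have h1 : (fun y : ℝ => P y * K y) = fun y : ℝ => ∑ k ∈ Finset.range (l + 1),
        (((k ! : ℝ)⁻¹ * (-h) ^ k * iteratedDeriv k g u) * (y ^ k * K y)) := by
      funext y
      rw [hP, Finset.sum_mul]
      refine Finset.sum_congr rfl fun k _ => ?_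
      rw [show (-(h * y)) ^ k = (-h) ^ k * y ^ k by rw [← mul_pow, neg_mul]]
      ring
    rw [h1, integral_finset_sum _ fun k _ => (hIntMom k).const_mul _]
    rw [Finset.sum_eq_single_of_mem 0 (Finset.mem_range.mpr (Nat.succ_pos l))]
    · simp only [pow_zero, Nat.factorial_zero, Nat.cast_one, inv_one, one_mul, mul_one,
        iteratedDeriv_zero]
      rw [integral_const_mul, hKone, mul_one]
    · intro k hk hkne
      rw [integral_const_mul, hmom k (Nat.one_le_iff_ne_zero.mpr hkne)
        (le_trans (Nat.lt_succ_iff.mp (Finset.mem_range.mp hk)) hl_le), mul_zero]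
  have hhold' : ∀ y ∈ Set.Ioo (0:ℝ) 1, ∀ y' ∈ Set.Ioo (0:ℝ) 1,
      |iteratedDeriv l g y' - iteratedDeriv l g y| ≤ L * |y' - y| ^ (β - l) := by
    intro y hy y' hy'
    rw [← iterOpen isOpen_Ioo hy' l, ← iterOpen isOpen_Ioo hy l]
    exact hghold y hy y' hy'
  have hmajor : ∀ y : ℝ, |(g (u - h * y) - P y) * K y|
      ≤ L * h ^ β * ((1 + |y|) ^ 𝓛 * |K y|) := by
    intro y
    by_cases hy : y ∈ Set.Icc (-A) A
    · have hx : u - h * y ∈ Set.Ioo (0:ℝ) 1 := hmapIcc y hy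
      have hTB := taylor_bound hβ hL.le hl hgsmooth hhold' ⟨hu0, hu1⟩ hx
      have hPB : P y = ∑ k ∈ Finset.range (l + 1),
          ((k ! : ℝ)⁻¹ * ((u - h * y) - u) ^ k * iteratedDeriv k g u) := by
        rw [hP]
        refine Finset.sum_congr rfl fun k _ => ?_
        rw [show (u - h * y) - u = -(h * y) by ring]
      rw [← hPB] at hTB
      have habs : |(u - h * y) - u| = h * |y| := by
        rw [show (u - h * y) - u = -(h * y) by ring, abs_neg, abs_mul, abs_of_pos hh]
      rw [habs] at hTB
      have h0 : (0:ℝ) ≤ h * |y| := by positivity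
      have e1 : (h * |y|) ^ (β - (l:ℝ)) * (h * |y|) ^ l = (h * |y|) ^ β := by
        rw [← Real.rpow_natCast (h * |y|) l,
          ← Real.rpow_add' h0 (by rw [sub_add_cancel]; exact ne_of_gt hβ), sub_add_cancel]
      have e2 : L * (h * |y|) ^ (β - (l:ℝ)) * (h * |y|) ^ l = L * (h ^ β * |y| ^ β) := by
        rw [mul_assoc, e1, Real.mul_rpow hh.le (abs_nonneg y)]
      have e3 : |y| ^ β ≤ (1 + |y|) ^ 𝓛 :=
        le_trans (Real.rpow_le_rpow (abs_nonneg y) (by linarith [abs_nonneg y]) hβ.le)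
          (Real.rpow_le_rpow_of_exponent_le (by linarith [abs_nonneg y]) h𝓛β)
      have hkey : L * (h * |y|) ^ (β - (l:ℝ)) * (h * |y|) ^ l
          ≤ L * h ^ β * (1 + |y|) ^ 𝓛 := by
        rw [e2]
        calc L * (h ^ β * |y| ^ β) = (L * h ^ β) * |y| ^ β := by ring
          _ ≤ (L * h ^ β) * (1 + |y|) ^ 𝓛 :=
            mul_le_mul_of_nonneg_left e3 (by positivity)
      rw [abs_mul]
      calc |g (u - h * y) - P y| * |K y|
          ≤ (L * (h * |y|) ^ (β - (l:ℝ)) * (h * |y|) ^ l) * |K y| :=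
            mul_le_mul_of_nonneg_right hTB (abs_nonneg _)
        _ ≤ (L * h ^ β * (1 + |y|) ^ 𝓛) * |K y| :=
            mul_le_mul_of_nonneg_right hkey (abs_nonneg _)
        _ = L * h ^ β * ((1 + |y|) ^ 𝓛 * |K y|) := by ring
    · have hK0 : K y = 0 := hKsupp y hy
      simp [hK0]
  rw [hsplit, hPint, add_sub_cancel_left]
  calc |∫ y : ℝ, (g (u - h * y) - P y) * K y|
      ≤ ∫ y : ℝ, |(g (u - h * y) - P y) * K y| := by
        have := norm_integral_le_integral_norm (μ := volume)
          (fun y : ℝ => (g (u - h * y) - P y) * K y)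
        simpa only [Real.norm_eq_abs] using this
    _ ≤ ∫ y : ℝ, L * h ^ β * ((1 + |y|) ^ 𝓛 * |K y|) :=
        integral_mono hIntR.abs (hCfin.const_mul _) hmajor
    _ = L * h ^ β * ∫ y : ℝ, (1 + |y|) ^ 𝓛 * |K y| := integral_const_mul _ _
    _ = (∫ y : ℝ, (1 + |y|) ^ 𝓛 * |K y|) * L * h ^ β := by ring
end

section
/- Let κ > 0, μ ∈ [−π, π), and let c(κ) > 0 be the normalizing constant such that f(x) := c(κ)·exp(κ·cos(x − μ)) satisfies ∫_{−π}^{π} f(x) dx = 1. Regard f as defined for all x ∈ ℝ by the same formula (its 2π-periodic extension). Then for every y ∈ ℝ, ∫_{−π}^{π} f(x)·log( f(x) / f(x + y) ) dx = 2·c(κ)·κ·sin²(y/2)·C(κ), where C(κ) := ∫_{−π}^{π} exp(κ·cos(x − μ))·cos(x − μ) dx, and consequently ∫_{−π}^{π} f(x)·log( f(x) / f(x + y) ) dx ≤ p∗·y² with p∗ = c(κ)·κ·C(κ)/2. -/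
/-!
Writing `θ = x - μ`, the integrand is `c e^{κ cos θ} · κ (cos θ - cos (θ + y))`, and
`cos θ - cos (θ + y) = (1 - cos y) cos θ + sin y sin θ`. By `2π`-periodicity the integrals may be
taken in `θ` over `[-π, π]`, where the `sin θ` term integrates to zero by oddness, leaving
`c κ (1 - cos y) C(κ) = 2 c κ sin² (y/2) C(κ)`. The bound follows from `sin² (y/2) ≤ (y/2)²` and
`C(κ) ≥ 0`, which holds because `e^{κ t} t ≥ t` for `κ ≥ 0` while `∫_{-π}^{π} cos = 0`.
-/

open Real MeasureTheory Set intervalIntegral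

theorem intervalIntegral.integral_eq_zero_of_odd {E : Type*} [NormedAddCommGroup E]
    [NormedSpace ℝ E] {f : ℝ → E} (hf : ∀ x, f (-x) = -f x) (a : ℝ) :
    ∫ x in -a..a, f x = 0 := by
  have h := integral_comp_neg f (a := -a) (b := a)
  simp only [hf, integral_neg, neg_neg] at h
  have htwo : (2 : ℝ) • ∫ x in -a..a, f x = 0 := by
    rw [two_smul]
    nth_rewrite 1 [← h]
    exact neg_add_cancel _
  exact (smul_eq_zero.mp htwo).resolve_left two_ne_zero

theorem Function.Periodic.intervalIntegral_comp_sub_eq {E : Type*} [NormedAddCommGroup E]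
    [NormedSpace ℝ E] {f : ℝ → E} {a b : ℝ} (hf : Function.Periodic f (b - a)) (μ : ℝ) :
    ∫ x in a..b, f (x - μ) = ∫ x in a..b, f x := by
  have h := hf.intervalIntegral_add_eq (a - μ) a
  rw [sub_add_sub_cancel', add_sub_cancel] at h
  rw [integral_comp_sub_right, h]

theorem integral_exp_mul_cos_mul_sin_sub_eq_zero (κ μ : ℝ) :
    ∫ x in -π..π, exp (κ * cos (x - μ)) * sin (x - μ) = 0 := by
  have hper : Function.Periodic (fun θ => exp (κ * cos θ) * sin θ) (π - -π) := fun θ => by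
    simp only [sub_neg_eq_add, ← two_mul, cos_add_two_pi, sin_add_two_pi]
  rw [hper.intervalIntegral_comp_sub_eq μ]
  exact integral_eq_zero_of_odd (fun θ => by simp only [cos_neg, sin_neg, mul_neg]) π

theorem le_exp_mul_mul_self {κ : ℝ} (hκ : 0 ≤ κ) (t : ℝ) : t ≤ exp (κ * t) * t := by
  rcases le_total 0 t with ht | ht
  · exact le_mul_of_one_le_left ht (one_le_exp (mul_nonneg hκ ht))
  · exact le_mul_of_le_one_left ht (exp_le_one_iff.mpr (mul_nonpos_of_nonneg_of_nonpos hκ ht))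

theorem integral_exp_mul_cos_mul_cos_sub_nonneg {κ : ℝ} (hκ : 0 ≤ κ) (μ : ℝ) :
    0 ≤ ∫ x in -π..π, exp (κ * cos (x - μ)) * cos (x - μ) := by
  have hper : Function.Periodic (fun θ => exp (κ * cos θ) * cos θ) (π - -π) := fun θ => by
    simp only [sub_neg_eq_add, ← two_mul, cos_add_two_pi]
  rw [hper.intervalIntegral_comp_sub_eq μ]
  calc (0 : ℝ) = ∫ θ in -π..π, cos θ := by
        simp only [integral_cos, sin_neg, sin_pi, neg_zero, sub_zero]
    _ ≤ ∫ θ in -π..π, exp (κ * cos θ) * cos θ :=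
      integral_mono_on (by linarith [pi_pos]) (continuous_cos.intervalIntegrable _ _)
        (Continuous.intervalIntegrable (by fun_prop) _ _)
        (fun θ _ => le_exp_mul_mul_self hκ (cos θ))

theorem mul_exp_mul_cos_mul_log_div_add {c : ℝ} (hc : c ≠ 0) (κ θ y : ℝ) :
    c * exp (κ * cos θ) * log (c * exp (κ * cos θ) / (c * exp (κ * cos (θ + y)))) =
      c * κ * (1 - cos y) * (exp (κ * cos θ) * cos θ) +
        c * κ * sin y * (exp (κ * cos θ) * sin θ) := by
  rw [mul_div_mul_left _ _ hc, ← exp_sub, log_exp, cos_add]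
  ring

theorem integral_vonMises_mul_log_div_shift {c : ℝ} (hc : c ≠ 0) (κ μ y : ℝ) :
    ∫ x in -π..π, c * exp (κ * cos (x - μ)) *
        log (c * exp (κ * cos (x - μ)) / (c * exp (κ * cos (x + y - μ)))) =
      c * κ * (1 - cos y) * ∫ x in -π..π, exp (κ * cos (x - μ)) * cos (x - μ) := by
  have hpt (x : ℝ) := sub_add_eq_add_sub x μ y ▸ mul_exp_mul_cos_mul_log_div_add hc κ (x - μ) y
  simp only [hpt]
  rw [integral_add (Continuous.intervalIntegrable (by fun_prop) _ _)
      (Continuous.intervalIntegrable (by fun_prop) _ _),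
    intervalIntegral.integral_const_mul, intervalIntegral.integral_const_mul,
    integral_exp_mul_cos_mul_sin_sub_eq_zero, mul_zero, add_zero]

theorem stmt12_general (κ μ : ℝ) (hκ : 0 < κ)
    (c : ℝ) (hc : 0 < c) :
    ∀ y : ℝ,
      ((∫ x in (-Real.pi)..Real.pi,
          (c * Real.exp (κ * Real.cos (x - μ))) *
            Real.log ((c * Real.exp (κ * Real.cos (x - μ))) /
              (c * Real.exp (κ * Real.cos (x + y - μ)))))
        = 2 * c * κ * (Real.sin (y / 2)) ^ 2 *
            (∫ x in (-Real.pi)..Real.pi,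
              Real.exp (κ * Real.cos (x - μ)) * Real.cos (x - μ))) ∧
      ((∫ x in (-Real.pi)..Real.pi,
          (c * Real.exp (κ * Real.cos (x - μ))) *
            Real.log ((c * Real.exp (κ * Real.cos (x - μ))) /
              (c * Real.exp (κ * Real.cos (x + y - μ)))))
        ≤ (c * κ *
            (∫ x in (-Real.pi)..Real.pi,
              Real.exp (κ * Real.cos (x - μ)) * Real.cos (x - μ)) / 2) * y ^ 2) := by
  intro y
  set C := ∫ x in -π..π, exp (κ * cos (x - μ)) * cos (x - μ)
  have hC : 0 ≤ C := integral_exp_mul_cos_mul_cos_sub_nonneg hκ.le μ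
  have hhalf : 1 - cos y = 2 * sin (y / 2) ^ 2 := by
    rw [sin_sq_eq_half_sub, mul_div_cancel₀ y two_ne_zero]
    ring
  rw [integral_vonMises_mul_log_div_shift hc.ne', hhalf]
  refine ⟨by ring, ?_⟩
  calc c * κ * (2 * sin (y / 2) ^ 2) * C = 2 * (c * κ * C) * sin (y / 2) ^ 2 := by ring
    _ ≤ 2 * (c * κ * C) * (y / 2) ^ 2 := mul_le_mul_of_nonneg_left sin_sq_le_sq (by positivity)
    _ = c * κ * C / 2 * y ^ 2 := by ring

/-- Kullback–Leibler shift computation for the von Mises density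
`f(x) = c(κ) exp (κ cos (x - μ))` (extended `2π`-periodically to `ℝ`): for every `y`,
`∫_{-π}^{π} f log (f / f(· + y)) = 2 c κ sin²(y/2) C(κ)` with
`C(κ) = ∫_{-π}^{π} exp (κ cos (x - μ)) cos (x - μ) dx`, and consequently this quantity is at most
`p∗ y²` with `p∗ = c κ C(κ) / 2`. -/
theorem stmt12 (κ μ : ℝ) (hκ : 0 < κ) (hμ : μ ∈ Set.Ico (-Real.pi) Real.pi)
    (c : ℝ) (hc : 0 < c)
    (hnorm : (∫ x in (-Real.pi)..Real.pi, c * Real.exp (κ * Real.cos (x - μ))) = 1) :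
    ∀ y : ℝ,
      ((∫ x in (-Real.pi)..Real.pi,
          (c * Real.exp (κ * Real.cos (x - μ))) *
            Real.log ((c * Real.exp (κ * Real.cos (x - μ))) /
              (c * Real.exp (κ * Real.cos (x + y - μ)))))
        = 2 * c * κ * (Real.sin (y / 2)) ^ 2 *
            (∫ x in (-Real.pi)..Real.pi,
              Real.exp (κ * Real.cos (x - μ)) * Real.cos (x - μ))) ∧
      ((∫ x in (-Real.pi)..Real.pi,
          (c * Real.exp (κ * Real.cos (x - μ))) *
            Real.log ((c * Real.exp (κ * Real.cos (x - μ))) /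
              (c * Real.exp (κ * Real.cos (x + y - μ)))))
        ≤ (c * κ *
            (∫ x in (-Real.pi)..Real.pi,
              Real.exp (κ * Real.cos (x - μ)) * Real.cos (x - μ)) / 2) * y ^ 2) :=
  stmt12_general κ μ hκ c hc
end

section
/- Let β, L > 0, x_0 ∈ [0,1] and h > 0. Let K : ℝ → [0,∞) be bounded with maximum K_max, vanishing outside (−1/2, 1/2), and set m_1(x) = L·h^β·K((x − x_0)/h). Let X_1, …, X_n be i.i.d. random variables with density μ on [0,1] bounded by μ_0, and let p_ζ be a probability density on [−π, π] (extended 2π-periodically) satisfying ∫ p_ζ(u)·log( p_ζ(u)/p_ζ(u + y) ) du ≤ p∗·y² for all |y| ≤ y_0, where p∗, y_0 > 0. Assume L·h^β·K_max ≤ y_0. Then E[ Σ_{i=1}^n ∫ p_ζ(y)·log( p_ζ(y) / p_ζ(y − m_1(X_i)) ) dy ] ≤ p∗·L²·K_max²·μ_0·n·h^{2β+1}. -/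
open Real Set MeasureTheory ProbabilityTheory

/-!
Since `m₁ ≥ 0` is bounded by `L h^β K_max ≤ y₀`, the quadratic KL-shift condition bounds the
`i`-th summand by `p∗ m₁(Xᵢ)²`. The law of `Xᵢ` is dominated by `μ₀ · Lebesgue`, so
`E[m₁(Xᵢ)²] ≤ μ₀ ∫ m₁² ≤ μ₀ (L h^β K_max)² h`, as `m₁` vanishes off an interval of length `h`.
-/

lemma integral_mono_of_nonneg_right {α : Type*} [MeasurableSpace α] {μ : Measure α}
    {f g : α → ℝ} (hg0 : 0 ≤ g) (hg : Integrable g μ) (hfg : f ≤ g) :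
    ∫ x, f x ∂μ ≤ ∫ x, g x ∂μ := by
  by_cases hf : Integrable f μ
  · exact integral_mono hf hg hfg
  · rw [integral_undef hf]
    exact integral_nonneg hg0

section DensityBound

variable {Ω : Type*} [MeasurableSpace Ω] {P : Measure Ω} {ρ : ℝ → ℝ} {c : ℝ}

lemma map_le_smul_volume_of_density_le {X : Ω → ℝ}
    (hlaw : P.map X = volume.withDensity (fun x => ENNReal.ofReal (ρ x))) (hρ : ∀ x, ρ x ≤ c) :
    P.map X ≤ ENNReal.ofReal c • volume := by
  rw [hlaw, ← withDensity_const]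
  exact withDensity_mono (ae_of_all _ fun x => ENNReal.ofReal_le_ofReal (hρ x))

lemma integrable_comp_of_density_le {X : Ω → ℝ} (hX : Measurable X)
    (hlaw : P.map X = volume.withDensity (fun x => ENNReal.ofReal (ρ x))) (hρ : ∀ x, ρ x ≤ c)
    {φ : ℝ → ℝ} (hφ : Integrable φ) : Integrable (fun ω => φ (X ω)) P :=
  ((hφ.smul_measure ENNReal.ofReal_ne_top).mono_measure
    (map_le_smul_volume_of_density_le hlaw hρ)).comp_measurable hX

lemma integral_comp_le_of_density_le {X : Ω → ℝ} (hX : Measurable X)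
    (hlaw : P.map X = volume.withDensity (fun x => ENNReal.ofReal (ρ x))) (hρ : ∀ x, ρ x ≤ c)
    (hc : 0 ≤ c) {φ : ℝ → ℝ} (hφ0 : 0 ≤ φ) (hφ : Integrable φ) :
    ∫ ω, φ (X ω) ∂P ≤ c * ∫ x, φ x := by
  have hle := map_le_smul_volume_of_density_le hlaw hρ
  have hφc : Integrable φ (ENNReal.ofReal c • volume) := hφ.smul_measure ENNReal.ofReal_ne_top
  calc ∫ ω, φ (X ω) ∂P = ∫ x, φ x ∂P.map X :=
        (integral_map hX.aemeasurable (hφc.mono_measure hle).aestronglyMeasurable).symm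
    _ ≤ ∫ x, φ x ∂(ENNReal.ofReal c • volume) := integral_mono_measure hle (ae_of_all _ hφ0) hφc
    _ = c * ∫ x, φ x := by rw [integral_smul_measure, ENNReal.toReal_ofReal hc, smul_eq_mul]

lemma integral_sum_comp_le_of_density_le {ι : Type*} [Fintype ι] {X : ι → Ω → ℝ}
    (hX : ∀ i, Measurable (X i))
    (hlaw : ∀ i, P.map (X i) = volume.withDensity (fun x => ENNReal.ofReal (ρ x)))
    (hρ : ∀ x, ρ x ≤ c) (hc : 0 ≤ c) {φ : ℝ → ℝ} (hφ0 : 0 ≤ φ) (hφ : Integrable φ) :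
    ∫ ω, ∑ i, φ (X i ω) ∂P ≤ Fintype.card ι * c * ∫ x, φ x := by
  rw [integral_finsetSum _ fun i _ => integrable_comp_of_density_le (hX i) (hlaw i) hρ hφ]
  calc ∑ i, ∫ ω, φ (X i ω) ∂P ≤ ∑ _i : ι, c * ∫ x, φ x :=
        Finset.sum_le_sum fun i _ => integral_comp_le_of_density_le (hX i) (hlaw i) hρ hc hφ0 hφ
    _ = Fintype.card ι * c * ∫ x, φ x := by
        rw [Finset.sum_const, Finset.card_univ, nsmul_eq_mul, mul_assoc]

end DensityBound

noncomputable def scaledBump (L β h x₀ : ℝ) (K : ℝ → ℝ) (x : ℝ) : ℝ := L * h ^ β * K ((x - x₀) / h)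

section ScaledBump

variable {L β h x₀ Kmax : ℝ} {K : ℝ → ℝ}

lemma scaledBump_nonneg (hL : 0 ≤ L) (hh : 0 ≤ h) (hK0 : ∀ x, 0 ≤ K x) (x : ℝ) :
    0 ≤ scaledBump L β h x₀ K x :=
  mul_nonneg (mul_nonneg hL (rpow_nonneg hh β)) (hK0 _)

lemma scaledBump_le (hL : 0 ≤ L) (hh : 0 ≤ h) (hKle : ∀ x, K x ≤ Kmax) (x : ℝ) :
    scaledBump L β h x₀ K x ≤ L * h ^ β * Kmax :=
  mul_le_mul_of_nonneg_left (hKle _) (mul_nonneg hL (rpow_nonneg hh β))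

lemma scaledBump_eq_zero (hh : 0 < h) (hKsupp : ∀ x, x ∉ Ioo (-(1/2) : ℝ) (1/2) → K x = 0)
    {x : ℝ} (hx : x ∉ Ioo (x₀ - h / 2) (x₀ + h / 2)) : scaledBump L β h x₀ K x = 0 := by
  refine mul_eq_zero_of_right _ (hKsupp _ fun ⟨hlo, hhi⟩ => hx ⟨?_, ?_⟩)
  · nlinarith [(lt_div_iff₀ hh).1 hlo]
  · nlinarith [(div_lt_iff₀ hh).1 hhi]

lemma measurable_scaledBump (hK : Measurable K) : Measurable (scaledBump L β h x₀ K) :=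
  measurable_const.mul (hK.comp ((measurable_id.sub_const x₀).div_const h))

lemma sq_scaledBump_le (hL : 0 ≤ L) (hh : 0 ≤ h) (hK0 : ∀ x, 0 ≤ K x) (hKle : ∀ x, K x ≤ Kmax)
    (x : ℝ) : scaledBump L β h x₀ K x ^ 2 ≤ (L * h ^ β * Kmax) ^ 2 :=
  pow_le_pow_left₀ (scaledBump_nonneg hL hh hK0 x) (scaledBump_le hL hh hKle x) 2

lemma integrable_sq_scaledBump (hL : 0 ≤ L) (hh : 0 < h) (hK : Measurable K)
    (hK0 : ∀ x, 0 ≤ K x) (hKle : ∀ x, K x ≤ Kmax)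
    (hKsupp : ∀ x, x ∉ Ioo (-(1/2) : ℝ) (1/2) → K x = 0) :
    Integrable (fun x => scaledBump L β h x₀ K x ^ 2) := by
  refine (Measure.integrableOn_of_bounded (s := Ioo (x₀ - h / 2) (x₀ + h / 2))
    measure_Ioo_lt_top.ne ((measurable_scaledBump hK).pow_const 2).aestronglyMeasurable
    (M := (L * h ^ β * Kmax) ^ 2) (ae_of_all _ fun x => ?_)).integrable_of_forall_notMem_eq_zero
    fun x hx => by simp [scaledBump_eq_zero hh hKsupp hx]
  rw [Real.norm_of_nonneg (sq_nonneg _)]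
  exact sq_scaledBump_le hL hh.le hK0 hKle x

lemma integral_sq_scaledBump_le (hL : 0 ≤ L) (hh : 0 < h)
    (hK0 : ∀ x, 0 ≤ K x) (hKle : ∀ x, K x ≤ Kmax)
    (hKsupp : ∀ x, x ∉ Ioo (-(1/2) : ℝ) (1/2) → K x = 0) :
    ∫ x, scaledBump L β h x₀ K x ^ 2 ≤ (L * h ^ β * Kmax) ^ 2 * h := by
  have hI : volume.real (Ioo (x₀ - h / 2) (x₀ + h / 2)) = h := by
    rw [volume_real_Ioo_of_le (by linarith)]
    ring
  calc ∫ x, scaledBump L β h x₀ K x ^ 2 ∂volume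
      = ∫ x in Ioo (x₀ - h / 2) (x₀ + h / 2), scaledBump L β h x₀ K x ^ 2 :=
        (setIntegral_eq_integral_of_forall_compl_eq_zero
          fun x hx => by simp [scaledBump_eq_zero hh hKsupp hx]).symm
    _ ≤ ‖∫ x in Ioo (x₀ - h / 2) (x₀ + h / 2), scaledBump L β h x₀ K x ^ 2‖ := le_norm_self _
    _ ≤ (L * h ^ β * Kmax) ^ 2 * volume.real (Ioo (x₀ - h / 2) (x₀ + h / 2)) :=
        norm_setIntegral_le_of_norm_le_const measure_Ioo_lt_top fun x _ => by
          rw [Real.norm_of_nonneg (sq_nonneg _)]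
          exact sq_scaledBump_le hL hh.le hK0 hKle x
    _ = (L * h ^ β * Kmax) ^ 2 * h := by rw [hI]

end ScaledBump

theorem stmt16_general {Ω : Type*} [MeasurableSpace Ω] (P : Measure Ω)
    (β L : ℝ) (hL : 0 < L)
    (x0 : ℝ) (h : ℝ) (hh : 0 < h)
    (K : ℝ → ℝ) (Kmax : ℝ) (hKmeas : Measurable K)
    (hKnn : ∀ x, 0 ≤ K x) (hKle : ∀ x, K x ≤ Kmax)
    (hKsupp : ∀ x : ℝ, x ∉ Set.Ioo (-(1/2) : ℝ) (1/2) → K x = 0)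
    (n : ℕ) (X : Fin n → Ω → ℝ) (hXmeas : ∀ i, Measurable (X i))
    (mudens : ℝ → ℝ) (mu0 : ℝ) (hmudensnn : ∀ x, 0 ≤ mudens x)
    (hmu0 : ∀ x, mudens x ≤ mu0)
    (hlaw : ∀ i, Measure.map (X i) P
      = volume.withDensity (fun x => ENNReal.ofReal (mudens x)))
    (pz : ℝ → ℝ)
    (pstar y0 : ℝ) (hpstar : 0 < pstar)
    (hKL : ∀ y : ℝ, |y| ≤ y0 →
      (∫ u in (-Real.pi)..Real.pi, pz u * Real.log (pz u / pz (u + y))) ≤ pstar * y ^ 2)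
    (hsmall : L * h ^ β * Kmax ≤ y0) :
    (∫ ω, (∑ i : Fin n, ∫ y in (-Real.pi)..Real.pi,
        pz y * Real.log (pz y / pz (y - L * h ^ β * K ((X i ω - x0) / h)))) ∂P)
      ≤ pstar * L ^ 2 * Kmax ^ 2 * mu0 * n * h ^ (2 * β + 1) := by
  set m := scaledBump L β h x0 K
  have hm0 : ∀ x, 0 ≤ m x := scaledBump_nonneg hL.le hh.le hKnn
  have hKL_bump : ∀ x, (∫ y in (-π)..π, pz y * log (pz y / pz (y - m x))) ≤ pstar * m x ^ 2 := by
    intro x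
    have hmy0 : |-m x| ≤ y0 := by
      rw [abs_neg, abs_of_nonneg (hm0 x)]
      exact (scaledBump_le hL.le hh.le hKle x).trans hsmall
    simpa only [neg_sq, ← sub_eq_add_neg] using hKL (-m x) hmy0
  have hφ0 : 0 ≤ fun x => pstar * m x ^ 2 := fun x => by positivity
  have hφ : Integrable fun x => pstar * m x ^ 2 :=
    (integrable_sq_scaledBump hL.le hh hKmeas hKnn hKle hKsupp).const_mul pstar
  have hmu0nn : 0 ≤ mu0 := (hmudensnn 0).trans (hmu0 0)
  have hpow : h ^ (2 * β + 1) = (h ^ β) ^ 2 * h := by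
    rw [rpow_add_one hh.ne', mul_comm 2 β, ← rpow_mul_natCast hh.le]
    norm_num
  calc (∫ ω, (∑ i : Fin n, ∫ y in (-π)..π, pz y * log (pz y / pz (y - m (X i ω)))) ∂P)
      ≤ ∫ ω, ∑ i, pstar * m (X i ω) ^ 2 ∂P :=
        integral_mono_of_nonneg_right (fun ω => Finset.sum_nonneg fun i _ => hφ0 _)
          (integrable_finsetSum _ fun i _ =>
            integrable_comp_of_density_le (hXmeas i) (hlaw i) hmu0 hφ)
          (fun ω => Finset.sum_le_sum fun i _ => hKL_bump (X i ω))
    _ ≤ n * mu0 * ∫ x, pstar * m x ^ 2 := by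
        simpa using integral_sum_comp_le_of_density_le hXmeas hlaw hmu0 hmu0nn hφ0 hφ
    _ ≤ n * mu0 * (pstar * ((L * h ^ β * Kmax) ^ 2 * h)) := by
        rw [integral_const_mul]
        gcongr
        exact integral_sq_scaledBump_le hL.le hh hKnn hKle hKsupp
    _ = pstar * L ^ 2 * Kmax ^ 2 * mu0 * n * h ^ (2 * β + 1) := by
        rw [hpow]
        ring

/-- Kullback–Leibler bound for the two-hypotheses reduction: with
`m₁(x) = L h^β K((x - x₀)/h)`, a design density bounded by `μ₀`, and an error density `p_ζ`
satisfying the quadratic KL-shift condition, one has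
`E[Σᵢ ∫ p_ζ(y) log (p_ζ(y)/p_ζ(y - m₁(Xᵢ))) dy] ≤ p∗ L² K_max² μ₀ n h^{2β+1}`. -/
theorem stmt16 {Ω : Type*} [MeasurableSpace Ω] (P : Measure Ω) [IsProbabilityMeasure P]
    (β L : ℝ) (hβ : 0 < β) (hL : 0 < L)
    (x0 : ℝ) (hx0 : x0 ∈ Set.Icc (0:ℝ) 1) (h : ℝ) (hh : 0 < h)
    (K : ℝ → ℝ) (Kmax : ℝ) (hKmeas : Measurable K)
    (hKnn : ∀ x, 0 ≤ K x) (hKle : ∀ x, K x ≤ Kmax) (hKmax : ∃ x, K x = Kmax)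
    (hKsupp : ∀ x : ℝ, x ∉ Set.Ioo (-(1/2) : ℝ) (1/2) → K x = 0)
    (n : ℕ) (X : Fin n → Ω → ℝ) (hXmeas : ∀ i, Measurable (X i))
    (hindep : iIndepFun X P)
    (mudens : ℝ → ℝ) (mu0 : ℝ) (hmudensnn : ∀ x, 0 ≤ mudens x)
    (hmu0 : ∀ x, mudens x ≤ mu0)
    (hmusupp : ∀ x : ℝ, x ∉ Set.Icc (0:ℝ) 1 → mudens x = 0)
    (hlaw : ∀ i, Measure.map (X i) P
      = volume.withDensity (fun x => ENNReal.ofReal (mudens x)))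
    (pz : ℝ → ℝ) (hpzmeas : Measurable pz)
    (hper : ∀ u, pz (u + 2 * Real.pi) = pz u) (hpznn : ∀ u, 0 ≤ pz u)
    (hpzint : (∫ u in (-Real.pi)..Real.pi, pz u) = 1)
    (pstar y0 : ℝ) (hpstar : 0 < pstar) (hy0 : 0 < y0)
    (hKL : ∀ y : ℝ, |y| ≤ y0 →
      (∫ u in (-Real.pi)..Real.pi, pz u * Real.log (pz u / pz (u + y))) ≤ pstar * y ^ 2)
    (hsmall : L * h ^ β * Kmax ≤ y0) :
    (∫ ω, (∑ i : Fin n, ∫ y in (-Real.pi)..Real.pi,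
        pz y * Real.log (pz y / pz (y - L * h ^ β * K ((X i ω - x0) / h)))) ∂P)
      ≤ pstar * L ^ 2 * Kmax ^ 2 * mu0 * n * h ^ (2 * β + 1) :=
  stmt16_general P β L hL x0 h hh K Kmax hKmeas hKnn hKle hKsupp n X hXmeas mudens mu0 hmudensnn
    hmu0 hlaw pz pstar y0 hpstar hKL hsmall
end
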